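/- arXiv:2205.08458 — 3 statements merged into one kernel-verified Lean document; each statement's English description precedes it below -/
import Mathlib

section
/- In the secure summation model with K ≥ 2 users, assuming security holds against the empty colluding set T = ∅, every user's message is independent of that user's own input: for every u ∈ {1,…,K}, I(X_u; W_u) = 0. -/
open MeasureTheory ProbabilityTheory

/-- Shannon entropy (in natural log units) of a finitely-valued random variable. -/
noncomputable def entr {Ω : Type*} [MeasurableSpace Ω] (μ : Measure Ω)
    {α : Type*} [Fintype α] [MeasurableSpace α] (X : Ω → α) : ℝ :=
  ∑ a : α, Real.negMulLog ((μ.map X) {a}).toReal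

/-- Conditional Shannon entropy `H(X | Y)`. -/
noncomputable def condEntr {Ω : Type*} [MeasurableSpace Ω] (μ : Measure Ω)
    {α β : Type*} [Fintype α] [MeasurableSpace α] [Fintype β] [MeasurableSpace β]
    (X : Ω → α) (Y : Ω → β) : ℝ :=
  entr μ (fun ω => (X ω, Y ω)) - entr μ Y

/-- Conditional mutual information `I(X ; Y | Z)`. -/
noncomputable def condMI {Ω : Type*} [MeasurableSpace Ω] (μ : Measure Ω)
    {α β γ : Type*} [Fintype α] [MeasurableSpace α] [Fintype β] [MeasurableSpace β]
    [Fintype γ] [MeasurableSpace γ] (X : Ω → α) (Y : Ω → β) (Z : Ω → γ) : ℝ :=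
  condEntr μ X Z + condEntr μ Y Z - condEntr μ (fun ω => (X ω, Y ω)) Z

/-- A random variable is uniformly distributed on a finite type. -/
def IsUnif {Ω : Type*} [MeasurableSpace Ω] (μ : Measure Ω)
    {α : Type*} [Fintype α] [MeasurableSpace α] (X : Ω → α) : Prop :=
  ∀ a : α, μ (X ⁻¹' {a}) = (Fintype.card α : ENNReal)⁻¹


/-- Mutual information `I(X ; Y)`. -/
noncomputable def mutInfo {Ω : Type*} [MeasurableSpace Ω] (μ : Measure Ω)
    {α β : Type*} [Fintype α] [MeasurableSpace α] [Fintype β] [MeasurableSpace β]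
    (X : Ω → α) (Y : Ω → β) : ℝ :=
  entr μ X + entr μ Y - entr μ (fun ω => (X ω, Y ω))

/-!
Security against the empty coalition says that the inputs `W` and the messages `X` are
conditionally independent given the sum `S = ∑ k, W k`; hence so are `W` and `X u`, and
`I(X u; W) = I(X u; S)`. Because some other input masks `W u` inside the sum, `S` is uniform and
independent of `W u`, so conditioning on `W u` cannot decrease the information that `X u` carries
about `S`. Together with `I(X u; W) ≥ I(X u; W u, S)` this leaves no room for `I(X u; W u)`.
Every inequality used is an instance of the nonnegativity of conditional mutual information,
i.e. of Gibbs' inequality for finite distributions.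
-/

open Real Finset

section Gibbs

variable {α β : Type*} [Fintype α] [Fintype β]

lemma negMulLog_sum_le {ι : Type*} {s : Finset ι} {x : ι → ℝ} (hx : ∀ i ∈ s, 0 ≤ x i) :
    negMulLog (∑ i ∈ s, x i) ≤ ∑ i ∈ s, negMulLog (x i) := by
  simp only [negMulLog, neg_mul, sum_neg_distrib, sum_mul, neg_le_neg_iff]
  refine sum_le_sum fun i hi => ?_
  rcases (hx i hi).eq_or_lt with h | h
  · simp [← h]
  · exact mul_le_mul_of_nonneg_left
      (log_le_log h (single_le_sum hx hi)) h.le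

lemma mul_log_div_le_sub {x y : ℝ} (hx : 0 < x) (hy : 0 < y) : x * log (y / x) ≤ y - x :=
  calc x * log (y / x) ≤ x * (y / x - 1) :=
        mul_le_mul_of_nonneg_left (log_le_sub_one_of_pos (div_pos hy hx)) hx.le
    _ = y - x := by field_simp

theorem sum_negMulLog_le_sum_negMulLog_marginals (p : α → β → ℝ) (hp : ∀ a b, 0 ≤ p a b) :
    ∑ a, ∑ b, negMulLog (p a b) + negMulLog (∑ a, ∑ b, p a b) ≤
      ∑ a, negMulLog (∑ b, p a b) + ∑ b, negMulLog (∑ a, p a b) := by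
  set pa := fun a => ∑ b, p a b
  set pb := fun b => ∑ a, p a b
  set P := ∑ a, ∑ b, p a b
  have hpa : ∀ a b, p a b ≤ pa a := fun a b => single_le_sum (fun b _ => hp a b) (mem_univ b)
  have hpb : ∀ a b, p a b ≤ pb b := fun a b => single_le_sum (fun a _ => hp a b) (mem_univ a)
  have hP : ∀ a, pa a ≤ P := fun a =>
    single_le_sum (f := pa) (fun a _ => sum_nonneg fun b _ => hp a b) (mem_univ a)
  have hterm : ∀ a b, p a b * (log (pa a) + log (pb b) - log P - log (p a b)) ≤
      pa a * pb b / P - p a b := by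
    intro a b
    rcases (hp a b).eq_or_lt with h | h
    · rw [← h, zero_mul, sub_zero]
      exact div_nonneg (mul_nonneg (h.le.trans (hpa a b)) (h.le.trans (hpb a b)))
        ((h.le.trans (hpa a b)).trans (hP a))
    · have ha := h.trans_le (hpa a b)
      have hb := h.trans_le (hpb a b)
      have hPpos := ha.trans_le (hP a)
      rw [← log_mul ha.ne' hb.ne', ← log_div (by positivity) hPpos.ne',
        ← log_div (by positivity) h.ne']
      exact mul_log_div_le_sub h (by positivity)
  have hrhs : ∑ a, ∑ b, (pa a * pb b / P - p a b) = 0 := by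
    have : ∑ b, pb b = P := sum_comm
    simp only [sum_sub_distrib, ← sum_div, ← mul_sum, ← sum_mul, this]
    exact sub_eq_zero.2 (mul_self_div_self P)
  have hlhs : ∑ a, ∑ b, p a b * (log (pa a) + log (pb b) - log P - log (p a b)) =
      ∑ a, ∑ b, negMulLog (p a b) + negMulLog P -
        (∑ a, negMulLog (pa a) + ∑ b, negMulLog (pb b)) := by
    simp only [mul_add, mul_sub, sum_add_distrib, sum_sub_distrib, ← sum_mul, negMulLog,
      neg_mul, sum_neg_distrib]
    rw [sum_comm (f := fun a b => p a b * log (pb b))]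
    simp only [← sum_mul, pa, pb, P]
    ring
  show ∑ a, ∑ b, negMulLog (p a b) + negMulLog P ≤ ∑ a, negMulLog (pa a) + ∑ b, negMulLog (pb b)
  linarith [sum_le_sum fun a (_ : a ∈ univ) => sum_le_sum fun b (_ : b ∈ univ) => hterm a b]

theorem sum_negMulLog_le_sum_negMulLog_marginals₃ {γ : Type*} [Fintype γ] (p : α → β → γ → ℝ)
    (hp : ∀ a b c, 0 ≤ p a b c) :
    ∑ a, ∑ b, ∑ c, negMulLog (p a b c) + ∑ c, negMulLog (∑ a, ∑ b, p a b c) ≤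
      ∑ a, ∑ c, negMulLog (∑ b, p a b c) + ∑ b, ∑ c, negMulLog (∑ a, p a b c) := by
  have h := sum_le_sum fun c (_ : c ∈ univ) =>
    sum_negMulLog_le_sum_negMulLog_marginals (p · · c) fun a b => hp a b c
  simp only [sum_add_distrib] at h
  have e : ∑ c, ∑ a, ∑ b, negMulLog (p a b c) = ∑ a, ∑ b, ∑ c, negMulLog (p a b c) := by
    rw [sum_comm]; exact sum_congr rfl fun a _ => sum_comm
  rw [e, sum_comm (f := fun c a => negMulLog (∑ b, p a b c)),
    sum_comm (f := fun c b => negMulLog (∑ a, p a b c))] at h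
  exact h

end Gibbs

section Entropy

variable {Ω : Type*} [MeasurableSpace Ω] {μ : Measure Ω} [IsProbabilityMeasure μ]
  {α β γ τ : Type*} [Fintype α] [MeasurableSpace α] [MeasurableSingletonClass α]
  [Fintype β] [MeasurableSpace β] [MeasurableSingletonClass β]
  [Fintype γ] [MeasurableSpace γ] [MeasurableSingletonClass γ]
  [Fintype τ] [MeasurableSpace τ] [MeasurableSingletonClass τ]

lemma sum_measureReal_map_singleton {X : Ω → α} (hX : Measurable X) :
    ∑ a, (μ.map X).real {a} = 1 := by
  have := Measure.isProbabilityMeasure_map (μ := μ) hX.aemeasurable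
  rw [sum_measureReal_singleton, coe_univ, probReal_univ]

lemma entr_comp_eq_sum [DecidableEq α] {T : Ω → τ} (hT : Measurable T) (f : τ → α) :
    entr μ (f ∘ T) = ∑ a, negMulLog (∑ t with f t = a, (μ.map T).real {t}) := by
  refine sum_congr rfl fun a _ => ?_
  rw [← Measure.map_map (measurable_of_finite f) hT, ← measureReal_def,
    map_measureReal_apply (measurable_of_finite f) (measurableSet_singleton a),
    sum_measureReal_singleton]
  congr 2
  ext t
  simp

theorem entr_comp_le {X : Ω → α} (hX : Measurable X) (f : α → β) :
    entr μ (f ∘ X) ≤ entr μ X := by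
  classical
  rw [entr_comp_eq_sum hX]
  calc ∑ b, negMulLog (∑ a with f a = b, (μ.map X).real {a})
      ≤ ∑ b, ∑ a with f a = b, negMulLog ((μ.map X).real {a}) :=
        sum_le_sum fun b _ => negMulLog_sum_le fun a _ => measureReal_nonneg
    _ = entr μ X := sum_fiberwise _ _ _

theorem entr_congr {X : Ω → α} {Y : Ω → β} (f : β → α) (g : α → β)
    (hf : X = f ∘ Y) (hg : Y = g ∘ X)
    (hX : Measurable X := by fun_prop) (hY : Measurable Y := by fun_prop) :
    entr μ X = entr μ Y :=
  le_antisymm (hf ▸ entr_comp_le hY f) (hg ▸ entr_comp_le hX g)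

theorem entr_prod_eq_add_of_indepFun {X : Ω → α} {Y : Ω → β} (hX : Measurable X)
    (hY : Measurable Y) (h : IndepFun X Y μ) :
    entr μ (fun ω => (X ω, Y ω)) = entr μ X + entr μ Y := by
  have hmap := (indepFun_iff_map_prod_eq_prod_map_map hX.aemeasurable hY.aemeasurable).1 h
  have hpair : ∀ a b, (μ.map fun ω => (X ω, Y ω)).real {(a, b)} =
      (μ.map X).real {a} * (μ.map Y).real {b} := fun a b => by
    rw [hmap, ← Set.singleton_prod_singleton, measureReal_prod_prod]
  change ∑ p : α × β, _ = ∑ a, negMulLog ((μ.map X).real {a}) +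
    ∑ b, negMulLog ((μ.map Y).real {b})
  simp only [← measureReal_def, Fintype.sum_prod_type, hpair, negMulLog_mul, sum_add_distrib,
    ← sum_mul, ← mul_sum, sum_measureReal_map_singleton hX, sum_measureReal_map_singleton hY]
  ring

theorem mutInfo_nonneg {X : Ω → α} {Y : Ω → β} (hX : Measurable X) (hY : Measurable Y) :
    0 ≤ mutInfo μ X Y := by
  classical
  set T := fun ω => (X ω, Y ω)
  have hT : Measurable T := hX.prodMk hY
  set p := fun a b => (μ.map T).real {(a, b)}
  have hXm : entr μ X = ∑ a, negMulLog (∑ b, p a b) := by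
    rw [show X = Prod.fst ∘ T from rfl, entr_comp_eq_sum hT]
    refine sum_congr rfl fun a _ => congrArg negMulLog ?_
    exact sum_nbij' Prod.snd (fun b => (a, b)) (by simp) (by simp) (by simp +contextual)
      (by simp) (by simp +contextual [p])
  have hYm : entr μ Y = ∑ b, negMulLog (∑ a, p a b) := by
    rw [show Y = Prod.snd ∘ T from rfl, entr_comp_eq_sum hT]
    refine sum_congr rfl fun b _ => congrArg negMulLog ?_
    exact sum_nbij' Prod.fst (fun a => (a, b)) (by simp) (by simp) (by simp +contextual)
      (by simp) (by simp +contextual [p])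
  have hXY : entr μ T = ∑ a, ∑ b, negMulLog (p a b) := by
    rw [entr, Fintype.sum_prod_type]; rfl
  have htot : ∑ a, ∑ b, p a b = 1 := by
    rw [← Fintype.sum_prod_type']; exact sum_measureReal_map_singleton hT
  have := sum_negMulLog_le_sum_negMulLog_marginals p fun a b => measureReal_nonneg
  rw [htot, negMulLog_one] at this
  simp only [mutInfo]
  linarith

theorem condMI_nonneg {X : Ω → α} {Y : Ω → β} {Z : Ω → γ} (hX : Measurable X)
    (hY : Measurable Y) (hZ : Measurable Z) : 0 ≤ condMI μ X Y Z := by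
  classical
  simp only [condMI, condEntr]
  set T := fun ω => ((X ω, Y ω), Z ω)
  have hT : Measurable T := (hX.prodMk hY).prodMk hZ
  set p := fun a b c => (μ.map T).real {((a, b), c)}
  have hXZ : entr μ (fun ω => (X ω, Z ω)) = ∑ a, ∑ c, negMulLog (∑ b, p a b c) := by
    rw [show (fun ω => (X ω, Z ω)) = (fun t : (α × β) × γ => (t.1.1, t.2)) ∘ T from rfl,
      entr_comp_eq_sum hT, Fintype.sum_prod_type]
    refine sum_congr rfl fun a _ => sum_congr rfl fun c _ => congrArg negMulLog ?_
    exact sum_nbij' (fun t => t.1.2) (fun b => ((a, b), c)) (by simp) (by simp)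
      (by simp +contextual [Prod.ext_iff]) (by simp) (by simp +contextual [p, Prod.ext_iff])
  have hYZ : entr μ (fun ω => (Y ω, Z ω)) = ∑ b, ∑ c, negMulLog (∑ a, p a b c) := by
    rw [show (fun ω => (Y ω, Z ω)) = (fun t : (α × β) × γ => (t.1.2, t.2)) ∘ T from rfl,
      entr_comp_eq_sum hT, Fintype.sum_prod_type]
    refine sum_congr rfl fun b _ => sum_congr rfl fun c _ => congrArg negMulLog ?_
    exact sum_nbij' (fun t => t.1.1) (fun a => ((a, b), c)) (by simp) (by simp)
      (by simp +contextual [Prod.ext_iff]) (by simp) (by simp +contextual [p, Prod.ext_iff])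
  have hZm : entr μ Z = ∑ c, negMulLog (∑ a, ∑ b, p a b c) := by
    rw [show Z = Prod.snd ∘ T from rfl, entr_comp_eq_sum hT]
    refine sum_congr rfl fun c _ => congrArg negMulLog ?_
    rw [← Fintype.sum_prod_type' (f := fun a b => p a b c)]
    exact sum_nbij' Prod.fst (fun t => (t, c)) (by simp) (by simp)
      (by simp +contextual [Prod.ext_iff]) (by simp) (by simp +contextual [p])
  have hXYZ : entr μ T = ∑ a, ∑ b, ∑ c, negMulLog (p a b c) := by
    rw [entr, Fintype.sum_prod_type, Fintype.sum_prod_type]; rfl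
  rw [hXZ, hYZ, hZm, hXYZ]
  linarith [sum_negMulLog_le_sum_negMulLog_marginals₃ p fun a b c => measureReal_nonneg]

end Entropy

section Uniform

variable {Ω : Type*} [MeasurableSpace Ω] {μ : Measure Ω}
  {G : Type*} [Fintype G] [MeasurableSpace G] [MeasurableSingletonClass G] {X Y : Ω → G}

lemma IsUnif.map_eq (hY : Measurable Y) (h : IsUnif μ Y) :
    μ.map Y = (Fintype.card G : ENNReal)⁻¹ • Measure.count := by
  refine Measure.ext_iff_singleton.2 fun a => ?_
  rw [Measure.map_apply hY (measurableSet_singleton a), h a, Measure.smul_apply,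
    Measure.count_singleton, smul_eq_mul, mul_one]

variable [IsProbabilityMeasure μ] [AddCommGroup G]

lemma map_prod_add_eq_of_isUnif (hX : Measurable X) (hY : Measurable Y) (hunif : IsUnif μ Y)
    (hind : IndepFun X Y μ) :
    μ.map (fun ω => (X ω, X ω + Y ω)) = (μ.map X).prod (μ.map Y) := by
  rw [show (fun ω => (X ω, X ω + Y ω)) =
      (fun z : G × G => (z.1, z.1 + z.2)) ∘ fun ω => (X ω, Y ω) from rfl,
    ← Measure.map_map (measurable_of_finite _) (hX.prodMk hY),
    hind.map_prod_eq_prod_map_map hX.aemeasurable hY.aemeasurable, hunif.map_eq hY]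
  exact (measurePreserving_prod_add _ _).map_eq

lemma isUnif_add (hX : Measurable X) (hY : Measurable Y) (hunif : IsUnif μ Y)
    (hind : IndepFun X Y μ) : IsUnif μ (fun ω => X ω + Y ω) := by
  have := Measure.isProbabilityMeasure_map (μ := μ) hX.aemeasurable
  have hXY : Measurable fun ω => X ω + Y ω := hX.add hY
  have h := congrArg (Measure.map Prod.snd) (map_prod_add_eq_of_isUnif hX hY hunif hind)
  rw [Measure.map_map measurable_snd (hX.prodMk hXY), Measure.map_snd_prod, measure_univ,
    one_smul] at h
  intro a
  rw [← Measure.map_apply hXY (measurableSet_singleton a), ← hunif a,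
    ← Measure.map_apply hY (measurableSet_singleton a)]
  exact congrArg (· {a}) h

lemma indepFun_add_of_isUnif (hX : Measurable X) (hY : Measurable Y) (hunif : IsUnif μ Y)
    (hind : IndepFun X Y μ) : IndepFun X (fun ω => X ω + Y ω) μ := by
  have hXY : Measurable fun ω => X ω + Y ω := hX.add hY
  rw [indepFun_iff_map_prod_eq_prod_map_map hX.aemeasurable hXY.aemeasurable,
    map_prod_add_eq_of_isUnif hX hY hunif hind, (isUnif_add hX hY hunif hind).map_eq hXY,
    hunif.map_eq hY]

lemma ProbabilityTheory.iIndepFun.indepFun_sum_of_isUnif {ι : Type*} [Fintype ι] {W : ι → Ω → G}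
    (hW : ∀ i, Measurable (W i)) (hunif : ∀ i, IsUnif μ (W i)) (hind : iIndepFun W μ)
    {u v : ι} (hvu : v ≠ u) : IndepFun (W u) (fun ω => ∑ i, W i ω) μ := by
  classical
  have hsum : ∀ {s : Finset ι} {i}, i ∉ s → IndepFun (fun ω => ∑ j ∈ s, W j ω) (W i) μ :=
    fun {s} _ hi => sum_fn s W ▸ hind.indepFun_finsetSum_of_notMem hW hi
  set R := fun ω => ∑ i ∈ univ.erase u, W i ω
  have hR : Measurable R := Finset.measurable_sum _ fun i _ => hW i
  have hRunif : IsUnif μ R := by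
    have hRv : R = fun ω => ∑ i ∈ (univ.erase u).erase v, W i ω + W v ω :=
      funext fun ω => (sum_erase_add _ _ (mem_erase.2 ⟨hvu, mem_univ v⟩)).symm
    rw [hRv]
    exact isUnif_add (Finset.measurable_sum _ fun i _ => hW i) (hW v) (hunif v)
      (hsum (notMem_erase v _))
  have hS : (fun ω => ∑ i, W i ω) = fun ω => W u ω + R ω :=
    funext fun ω => (add_sum_erase _ _ (mem_univ u)).symm
  rw [hS]
  exact indepFun_add_of_isUnif (hW u) hR hRunif (hsum (notMem_erase u _)).symm

end Uniform

section ConditionalIndependence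

variable {Ω : Type*} [MeasurableSpace Ω] {μ : Measure Ω} [IsProbabilityMeasure μ]
  {α β σ ν ξ : Type*} [Fintype α] [MeasurableSpace α] [MeasurableSingletonClass α]
  [Fintype β] [MeasurableSpace β] [MeasurableSingletonClass β]
  [Fintype σ] [MeasurableSpace σ] [MeasurableSingletonClass σ]
  [Fintype ν] [MeasurableSpace ν] [MeasurableSingletonClass ν]
  [Fintype ξ] [MeasurableSpace ξ] [MeasurableSingletonClass ξ]

theorem condMI_comp_right_le {A : Ω → α} {B : Ω → β} {C : Ω → σ} (hA : Measurable A)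
    (hB : Measurable B) (hC : Measurable C) (g : β → ξ) :
    condMI μ A (g ∘ B) C ≤ condMI μ A B C := by
  set G := g ∘ B
  have hG : Measurable G := (measurable_of_finite g).comp hB
  -- chain rule: `I(A; B | C) = I(A; G | C) + I(A; B | C, G)`
  have h := condMI_nonneg (μ := μ) hA hB (hC.prodMk hG)
  simp only [condMI, condEntr] at h ⊢
  have r₁ : entr μ (fun ω => (A ω, (C ω, G ω))) = entr μ (fun ω => ((A ω, G ω), C ω)) :=
    entr_congr (fun p => (p.1.1, (p.2, p.1.2))) (fun p => ((p.1, p.2.2), p.2.1)) rfl rfl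
  have r₂ : entr μ (fun ω => (B ω, (C ω, G ω))) = entr μ (fun ω => (B ω, C ω)) :=
    entr_congr (fun p => (p.1, (p.2, g p.1))) (fun p => (p.1, p.2.1)) rfl rfl
  have r₃ : entr μ (fun ω => ((A ω, B ω), (C ω, G ω))) = entr μ (fun ω => ((A ω, B ω), C ω)) :=
    entr_congr (fun p => (p.1, (p.2, g p.1.2))) (fun p => (p.1, p.2.1)) rfl rfl
  have r₄ : entr μ (fun ω => (C ω, G ω)) = entr μ (fun ω => (G ω, C ω)) :=
    entr_congr Prod.swap Prod.swap rfl rfl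
  linarith

theorem mutInfo_eq_zero_of_condMI_eq_zero {A : Ω → α} {G : Ω → ξ} (hA : Measurable A)
    (hG : Measurable G) (s : α → σ) (v : α → ν) (hcond : condMI μ A G (s ∘ A) = 0)
    (hind : IndepFun (v ∘ A) (s ∘ A) μ) :
    mutInfo μ G (v ∘ A) = 0 := by
  set S := s ∘ A
  set V := v ∘ A
  have hS : Measurable S := (measurable_of_finite s).comp hA
  have hV : Measurable V := (measurable_of_finite v).comp hA
  have h₁ := condMI_nonneg (μ := μ) hS hV hG
  have h₂ := condMI_nonneg (μ := μ) hG hA (hV.prodMk hS)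
  have h₃ := mutInfo_nonneg (μ := μ) hG hV
  have h₄ := entr_prod_eq_add_of_indepFun hV hS hind
  simp only [condMI, condEntr] at hcond h₁ h₂
  simp only [mutInfo] at h₃ ⊢
  have r₁ : entr μ (fun ω => (A ω, S ω)) = entr μ A :=
    entr_congr (fun a => (a, s a)) Prod.fst rfl rfl
  have r₂ : entr μ (fun ω => ((A ω, G ω), S ω)) = entr μ (fun ω => (A ω, G ω)) :=
    entr_congr (fun p => (p, s p.1)) Prod.fst rfl rfl
  have r₃ : entr μ (fun ω => (G ω, S ω)) = entr μ (fun ω => (S ω, G ω)) :=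
    entr_congr Prod.swap Prod.swap rfl rfl
  have r₄ : entr μ (fun ω => (V ω, G ω)) = entr μ (fun ω => (G ω, V ω)) :=
    entr_congr Prod.swap Prod.swap rfl rfl
  have r₅ : entr μ (fun ω => (G ω, (V ω, S ω))) = entr μ (fun ω => ((S ω, V ω), G ω)) :=
    entr_congr (fun p => (p.2, (p.1.2, p.1.1))) (fun p => ((p.2.2, p.2.1), p.1)) rfl rfl
  have r₆ : entr μ (fun ω => (A ω, (V ω, S ω))) = entr μ A :=
    entr_congr (fun a => (a, (v a, s a))) Prod.fst rfl rfl
  have r₇ : entr μ (fun ω => ((G ω, A ω), (V ω, S ω))) = entr μ (fun ω => (A ω, G ω)) :=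
    entr_congr (fun p => ((p.2, p.1), (v p.1, s p.1))) (fun p => (p.1.2, p.1.1)) rfl rfl
  -- `h₁ + h₂ - hcond`, with `h₄`, reads `I(G; V) ≤ 0`
  linarith

end ConditionalIndependence

theorem stmt4_general
    (q K L LX : ℕ) [NeZero q] (hK : 2 ≤ K)
    {Ω : Type*} [MeasurableSpace Ω] (μ : Measure Ω) [IsProbabilityMeasure μ]
    (κ : Fin K → Type*) [∀ k, Fintype (κ k)] [∀ k, MeasurableSpace (κ k)]
    (W : Fin K → Ω → (Fin L → ZMod q))
    (Z : ∀ k, Ω → κ k)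
    (X : Fin K → Ω → (Fin LX → ZMod q))
    (hWmeas : ∀ k, Measurable (W k))
    (hWunif : ∀ k, IsUnif μ (W k))
    (hWindep : iIndepFun W μ)
    (hXmeas : ∀ k, Measurable (X k))
    (hSecEmpty : condMI μ (fun ω => fun k => W k ω) (fun ω => fun k => X k ω)
      (fun ω => (∑ k, W k ω,
        fun k : {k : Fin K // k ∈ (∅ : Finset (Fin K))} => (W k.1 ω, Z k.1 ω))) = 0)
    (u : Fin K) :
    mutInfo μ (X u) (W u) = 0 := by
  obtain ⟨v, hvu⟩ := Fintype.exists_ne_of_one_lt_card (by rw [Fintype.card_fin]; omega) u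
  set A := fun ω k => W k ω
  have hA : Measurable A := measurable_pi_lambda _ hWmeas
  let j₀ : (k : {k : Fin K // k ∈ (∅ : Finset (Fin K))}) → (Fin L → ZMod q) × κ k.1 :=
    fun k => (notMem_empty k.1 k.2).elim
  let s : (Fin K → Fin L → ZMod q) → (Fin L → ZMod q) × _ := fun a => (∑ k, a k, j₀)
  have hcond : condMI μ A (fun ω k => X k ω) (s ∘ A) = 0 := by
    convert hSecEmpty using 3 with ω
    exact Prod.ext rfl (Subsingleton.elim _ _)
  have hS : Measurable (s ∘ A) := (measurable_of_finite s).comp hA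
  have hcond_u : condMI μ A (X u) (s ∘ A) = 0 :=
    le_antisymm (hcond ▸ condMI_comp_right_le hA (measurable_pi_lambda _ hXmeas) hS (· u))
      (condMI_nonneg hA (hXmeas u) hS)
  have hind : IndepFun (W u) (s ∘ A) μ :=
    (hWindep.indepFun_sum_of_isUnif hWmeas hWunif hvu).comp measurable_id
      (measurable_of_finite fun t => (t, j₀))
  exact mutInfo_eq_zero_of_condMI_eq_zero hA (hXmeas u) s (· u) hcond_u hind

/-- in the secure summation model, assuming security against the empty
colluding set, every user's message is independent of that user's own input:
`I(X_u ; W_u) = 0`. -/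
theorem stmt4
    (q K L LX : ℕ) [NeZero q] (hq : IsPrimePow q) (hK : 2 ≤ K) (hL : 1 ≤ L) (hLX : 1 ≤ LX)
    {Ω : Type*} [MeasurableSpace Ω] (μ : Measure Ω) [IsProbabilityMeasure μ]
    (κ : Fin K → Type*) [∀ k, Fintype (κ k)] [∀ k, MeasurableSpace (κ k)]
    (W : Fin K → Ω → (Fin L → ZMod q))
    (Z : ∀ k, Ω → κ k)
    (X : Fin K → Ω → (Fin LX → ZMod q))
    (hWmeas : ∀ k, Measurable (W k)) (hZmeas : ∀ k, Measurable (Z k))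
    (hWunif : ∀ k, IsUnif μ (W k))
    (hWindep : iIndepFun W μ)
    (hWZindep : IndepFun (fun ω => fun k => W k ω) (fun ω => fun k => Z k ω) μ)
    (f : ∀ k, (Fin L → ZMod q) → κ k → (Fin LX → ZMod q))
    (hX : ∀ k, X k = fun ω => f k (W k ω) (Z k ω))
    (hXmeas : ∀ k, Measurable (X k))
    (hSecEmpty : condMI μ (fun ω => fun k => W k ω) (fun ω => fun k => X k ω)
      (fun ω => (∑ k, W k ω,
        fun k : {k : Fin K // k ∈ (∅ : Finset (Fin K))} => (W k.1 ω, Z k.1 ω))) = 0)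
    (u : Fin K) :
    mutInfo μ (X u) (W u) = 0 :=
  stmt4_general q K L LX hK μ κ W Z X hWmeas hWunif hWindep hXmeas hSecEmpty u
end

section
/- Let q be a prime power, K ≥ 2, L ≥ 1. Let W_1,…,W_K, N_1,…,N_{K−1} be mutually independent random variables, each uniformly distributed on (ZMod q)^L. Define N_K = −(N_1 + ⋯ + N_{K−1}) and X_k = W_k + N_k for k ∈ {1,…,K}. Then (i) X_1 + ⋯ + X_K = W_1 + ⋯ + W_K almost surely, and (ii) for every subset T ⊆ {1,…,K}, I((W_k)_{k∈[K]}; (X_k)_{k∈[K]} | W_1+⋯+W_K, (W_k, N_k)_{k∈T}) = 0. In particular the rate tuple (R, R_Z, R_{Z_Σ}) = (1, 1, K−1) is achievable for secure summation with up to T colluding users for any 0 ≤ T ≤ K−2. -/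
open MeasureTheory ProbabilityTheory

/-!
Every quantity in the scheme is the image of one uniform random element `U` of the finite group
`A = G^K × G^(K-1)` (inputs and free keys) under a group homomorphism. The image of `U` under
`ψ` is uniform on the range of `ψ`, so its entropy is `log |A| - log |ker ψ|`, and the product
formula `|H + H'| |H ∩ H'| = |H| |H'|` turns the conditional mutual information into
`I(φ U; ψ U | χ U) = log [ker χ : (ker φ ∩ ker χ) + (ker ψ ∩ ker χ)]`. Security thus reduces to
splitting every source vector that the view `χ` does not see into one with zero inputs plus
one with zero messages: the second part has the same inputs `w` and keys `-w`, which is an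
admissible key vector exactly because `∑ w = 0`.
-/

theorem AddSubgroup.card_sup_mul_card_inf {G : Type*} [AddCommGroup G] (H K : AddSubgroup G) :
    Nat.card ↥(H ⊔ K) * Nat.card ↥(H ⊓ K) = Nat.card H * Nat.card K := by
  have hsup : Nat.card ↥(H ⊔ K) = Nat.card K * K.relIndex H := by
    rw [← relIndex_sup_right, ← relIndex_bot_left, ← relIndex_bot_left,
      relIndex_mul_relIndex _ _ _ bot_le le_sup_right]
  have hH : Nat.card H = Nat.card ↥(H ⊓ K) * K.relIndex H := by
    rw [← relIndex_bot_left, ← relIndex_bot_left, ← inf_relIndex_right K H, inf_comm,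
      relIndex_mul_relIndex _ _ _ bot_le inf_le_right]
  rw [hsup, hH]
  ring

open Finset

theorem AddMonoidHom.card_fiber {A B : Type*} [AddCommGroup A] [Fintype A] [AddCommGroup B]
    [DecidableEq B] (ψ : A →+ B) (b : B) :
    #{a | ψ a = b} = if b ∈ ψ.range then Nat.card ψ.ker else 0 := by
  split_ifs with hb
  · rw [AddMonoidHom.card_fiber_eq_of_mem_range ψ hb ⟨0, map_zero ψ⟩, Nat.card_eq_fintype_card,
      Fintype.card_subtype]
    simp [AddMonoidHom.mem_ker]
  · rw [card_eq_zero, filter_eq_empty_iff]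
    exact fun a _ ha => hb ⟨a, ha⟩

section UniformHomImage

variable {Ω A B C D : Type*} [MeasurableSpace Ω] {μ : Measure Ω}
  [Fintype A] [MeasurableSpace A] [MeasurableSingletonClass A]
  [MeasurableSpace B] [MeasurableSingletonClass B] [MeasurableSpace C] [MeasurableSingletonClass C]
  [MeasurableSpace D] [MeasurableSingletonClass D] {U : Ω → A}

theorem isUnif_pi_of_iIndepFun {ι : Type*} [Fintype ι] [DecidableEq ι] {β : ι → Type*}
    [∀ i, Fintype (β i)] [∀ i, MeasurableSpace (β i)] [∀ i, MeasurableSingletonClass (β i)]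
    {Y : ∀ i, Ω → β i} (hindep : iIndepFun Y μ) (hunif : ∀ i, IsUnif μ (Y i)) :
    IsUnif μ (fun ω i => Y i ω) := by
  intro g
  have hpre : (fun ω i => Y i ω) ⁻¹' {g} = ⋂ i ∈ (univ : Finset ι), Y i ⁻¹' {g i} := by
    ext ω
    simp [funext_iff]
  rw [hpre, iIndepFun_iff_measure_inter_preimage_eq_mul.mp hindep univ
    (fun i _ => measurableSet_singleton (g i))]
  simp only [hunif _ _, Fintype.card_pi, Nat.cast_prod]
  exact (ENNReal.prod_inv_distrib fun i _ j _ _ => .inr (ENNReal.natCast_ne_top _)).symm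

theorem map_apply_singleton_of_isUnif [DecidableEq B] (hU : Measurable U) (hunif : IsUnif μ U)
    (f : A → B) (b : B) :
    μ.map (fun ω => f (U ω)) {b} = #{a | f a = b} * (Fintype.card A : ENNReal)⁻¹ := by
  have hfU : Measurable fun ω => f (U ω) := Measurable.of_discrete.comp hU
  rw [Measure.map_apply hfU (measurableSet_singleton b)]
  have hpre : (fun ω => f (U ω)) ⁻¹' {b} = U ⁻¹' ↑({a | f a = b} : Finset A) := by
    ext
    simp
  rw [hpre, ← sum_measure_preimage_singleton _ fun a _ => hU (measurableSet_singleton a)]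
  simp [hunif _]

theorem entr_comp_addMonoidHom_of_isUnif [AddCommGroup A] [AddCommGroup B] [Fintype B]
    (hU : Measurable U) (hunif : IsUnif μ U) (ψ : A →+ B) :
    entr μ (fun ω => ψ (U ω)) = Real.log (Fintype.card A) - Real.log (Nat.card ψ.ker) := by
  classical
  set k := Nat.card ψ.ker with hk_def
  set r := Nat.card ψ.range
  have hcard : (Fintype.card A : ℝ) = r * k := by
    rw [← Nat.card_eq_fintype_card, ← ψ.ker.card_mul_index, AddSubgroup.index_ker]
    push_cast
    ring
  have hk : (k : ℝ) ≠ 0 := Nat.cast_ne_zero.mpr Nat.card_pos.ne'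
  have hr : (r : ℝ) ≠ 0 := Nat.cast_ne_zero.mpr Nat.card_pos.ne'
  have hterm : ∀ b, Real.negMulLog (μ.map (fun ω => ψ (U ω)) {b}).toReal =
      if b ∈ ψ.range then Real.negMulLog (r : ℝ)⁻¹ else 0 := by
    intro b
    rw [map_apply_singleton_of_isUnif hU hunif, ψ.card_fiber, ← hk_def]
    split_ifs
    · congr 1
      rw [ENNReal.toReal_mul, ENNReal.toReal_inv, ENNReal.toReal_natCast,
        ENNReal.toReal_natCast, hcard]
      field_simp
    · simp
  have hrange : #{b | b ∈ ψ.range} = r := by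
    rw [← Fintype.card_subtype, ← Nat.card_eq_fintype_card]
  rw [entr, sum_congr rfl fun b _ => hterm b, sum_ite, sum_const_zero, add_zero, sum_const,
    hrange, nsmul_eq_mul, Real.negMulLog, Real.log_inv, hcard, Real.log_mul hr hk]
  field_simp
  ring

theorem condMI_comp_addMonoidHom_of_isUnif [AddCommGroup A] [AddCommGroup B] [Fintype B]
    [AddCommGroup C] [Fintype C] [AddCommGroup D] [Fintype D]
    (hU : Measurable U) (hunif : IsUnif μ U) (φ : A →+ B) (ψ : A →+ C) (χ : A →+ D) :
    condMI μ (fun ω => φ (U ω)) (fun ω => ψ (U ω)) (fun ω => χ (U ω)) =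
      Real.log (Nat.card χ.ker) - Real.log (Nat.card ↥(φ.ker ⊓ χ.ker ⊔ ψ.ker ⊓ χ.ker)) := by
  have hcard := AddSubgroup.card_sup_mul_card_inf (φ.ker ⊓ χ.ker) (ψ.ker ⊓ χ.ker)
  rw [← inf_inf_distrib_right] at hcard
  have hlog := congrArg (fun n : ℕ => Real.log n) hcard
  simp only [Nat.cast_mul] at hlog
  have hne : ∀ H : AddSubgroup A, (Nat.card H : ℝ) ≠ 0 :=
    fun H => Nat.cast_ne_zero.mpr Nat.card_pos.ne'
  rw [Real.log_mul (hne _) (hne _), Real.log_mul (hne _) (hne _)] at hlog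
  simp only [condMI, condEntr, ← AddMonoidHom.prod_apply,
    entr_comp_addMonoidHom_of_isUnif hU hunif, AddMonoidHom.ker_prod]
  linarith

theorem condMI_comp_addMonoidHom_eq_zero_of_isUnif [AddCommGroup A] [AddCommGroup B] [Fintype B]
    [AddCommGroup C] [Fintype C] [AddCommGroup D] [Fintype D]
    (hU : Measurable U) (hunif : IsUnif μ U) (φ : A →+ B) (ψ : A →+ C) (χ : A →+ D)
    (h : χ.ker ≤ φ.ker ⊓ χ.ker ⊔ ψ.ker ⊓ χ.ker) :
    condMI μ (fun ω => φ (U ω)) (fun ω => ψ (U ω)) (fun ω => χ (U ω)) = 0 := by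
  rw [condMI_comp_addMonoidHom_of_isUnif hU hunif,
    le_antisymm (sup_le inf_le_right inf_le_right) h, sub_self]

end UniformHomImage

section ZeroSumKey

variable {G : Type*} [AddCommGroup G] (K : ℕ)

def zeroSumKey : (Fin (K - 1) → G) →+ (Fin K → G) where
  toFun n k := if h : (k : ℕ) < K - 1 then n ⟨k, h⟩ else -∑ j, n j
  map_zero' := by
    ext
    simp
  map_add' n n' := by
    ext k
    by_cases h : (k : ℕ) < K - 1 <;> simp [h, sum_add_distrib, add_comm]

theorem sum_zeroSumKey (n : Fin (K - 1) → G) : ∑ k, zeroSumKey K n k = 0 := by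
  obtain _ | K := K
  · simp
  · rw [Fin.sum_univ_castSucc]
    simp [zeroSumKey]

theorem zeroSumKey_restrict {v : Fin K → G} (hv : ∑ k, v k = 0) :
    zeroSumKey K (fun j => v (Fin.castLE (Nat.sub_le K 1) j)) = v := by
  obtain _ | K := K
  · exact Subsingleton.elim _ _
  · ext k
    by_cases h : (k : ℕ) < K + 1 - 1
    · simp only [zeroSumKey, AddMonoidHom.coe_mk, ZeroHom.coe_mk, dif_pos h]
      rfl
    · obtain rfl : k = Fin.last K := Fin.ext (by rw [Fin.val_last]; omega)
      simp only [zeroSumKey, AddMonoidHom.coe_mk, ZeroHom.coe_mk, dif_neg h]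
      rw [Fin.sum_univ_castSucc] at hv
      exact neg_eq_of_add_eq_zero_right hv

end ZeroSumKey

section ZeroSumScheme

variable (G : Type*) [AddCommGroup G] (K : ℕ)

-- A source sample lists the `K` inputs followed by the `K - 1` free keys.
def schemeInputs : (Fin K ⊕ Fin (K - 1) → G) →+ (Fin K → G) :=
  AddMonoidHom.mk' (fun g k => g (.inl k)) fun _ _ => rfl

def schemeKeys : (Fin K ⊕ Fin (K - 1) → G) →+ (Fin K → G) :=
  (zeroSumKey K).comp (AddMonoidHom.mk' (fun g j => g (.inr j)) fun _ _ => rfl)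

def schemeMessages : (Fin K ⊕ Fin (K - 1) → G) →+ (Fin K → G) :=
  schemeInputs G K + schemeKeys G K

def schemeView (T : Finset (Fin K)) : (Fin K ⊕ Fin (K - 1) → G) →+ G × (T → G × G) :=
  AddMonoidHom.mk'
    (fun g => (∑ k, schemeInputs G K g k, fun k => (schemeInputs G K g k, schemeKeys G K g k)))
    fun a b => by ext <;> simp [sum_add_distrib]

variable {G K}

theorem mem_ker_schemeView {T : Finset (Fin K)} {g : Fin K ⊕ Fin (K - 1) → G} :
    g ∈ (schemeView G K T).ker ↔ ∑ k, schemeInputs G K g k = 0 ∧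
      ∀ k ∈ T, schemeInputs G K g k = 0 ∧ schemeKeys G K g k = 0 := by
  simp [schemeView, Prod.ext_iff, funext_iff, forall_and]

theorem ker_schemeView_le_sup (T : Finset (Fin K)) :
    (schemeView G K T).ker ≤ (schemeInputs G K).ker ⊓ (schemeView G K T).ker ⊔
      (schemeMessages G K).ker ⊓ (schemeView G K T).ker := by
  intro g hg
  obtain ⟨hsum, hT⟩ := mem_ker_schemeView.mp hg
  set w := schemeInputs G K g
  set b : Fin K ⊕ Fin (K - 1) → G := Sum.elim w fun j => -w (Fin.castLE (Nat.sub_le K 1) j)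
  have hb_inputs : schemeInputs G K b = w := rfl
  have hb_keys : schemeKeys G K b = -w :=
    zeroSumKey_restrict K (v := -w) (by simp [sum_neg_distrib, hsum])
  have hb : b ∈ (schemeMessages G K).ker ⊓ (schemeView G K T).ker := by
    refine ⟨?_, mem_ker_schemeView.mpr ⟨hsum, fun k hk => ?_⟩⟩
    · simp [schemeMessages, hb_inputs, hb_keys]
    · simp [hb_inputs, hb_keys, (hT k hk).1]
  have hgb : g - b ∈ (schemeInputs G K).ker ⊓ (schemeView G K T).ker :=
    AddSubgroup.mem_inf.mpr ⟨by simp [hb_inputs, w], sub_mem hg (AddSubgroup.mem_inf.mp hb).2⟩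
  simpa using AddSubgroup.add_mem_sup hgb hb

end ZeroSumScheme

theorem stmt7_general
    (q K L : ℕ) [NeZero q]
    {Ω : Type*} [MeasurableSpace Ω] (μ : Measure Ω)
    (W : Fin K → Ω → (Fin L → ZMod q))
    (N : Fin (K - 1) → Ω → (Fin L → ZMod q))
    (hWmeas : ∀ k, Measurable (W k)) (hNmeas : ∀ j, Measurable (N j))
    (hunif : ∀ i : Fin K ⊕ Fin (K - 1), IsUnif μ (Sum.elim W N i))
    (hindep : iIndepFun (Sum.elim W N) μ)
    (Ntot : Fin K → Ω → (Fin L → ZMod q))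
    (hNtot : ∀ k : Fin K, Ntot k =
      if h : (k : ℕ) < K - 1 then N ⟨k, h⟩ else fun ω => -(∑ j, N j ω))
    (X : Fin K → Ω → (Fin L → ZMod q))
    (hX : ∀ k, X k = fun ω => W k ω + Ntot k ω) :
    (∀ᵐ ω ∂μ, ∑ k, X k ω = ∑ k, W k ω) ∧
      ∀ T : Finset (Fin K),
        condMI μ (fun ω => fun k => W k ω) (fun ω => fun k => X k ω)
          (fun ω => (∑ k, W k ω,
            fun k : {k : Fin K // k ∈ T} => (W k.1 ω, Ntot k.1 ω))) = 0 := by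
  set U : Ω → (Fin K ⊕ Fin (K - 1) → Fin L → ZMod q) := fun ω i => Sum.elim W N i ω
  have hU : Measurable U := measurable_pi_iff.mpr (Sum.rec hWmeas hNmeas)
  have hNtot_eq : ∀ k ω, Ntot k ω = schemeKeys _ K (U ω) k := by
    intro k ω
    simp only [hNtot, schemeKeys, zeroSumKey, AddMonoidHom.comp_apply, AddMonoidHom.coe_mk,
      ZeroHom.coe_mk]
    split_ifs <;> rfl
  have hX_eq : ∀ k ω, X k ω = schemeMessages _ K (U ω) k := by
    intro k ω
    simp only [hX, hNtot_eq]
    rfl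
  refine ⟨.of_forall fun ω => ?_, fun T => ?_⟩
  · simp only [hX_eq, schemeMessages, AddMonoidHom.add_apply, Pi.add_apply, sum_add_distrib]
    rw [schemeKeys, AddMonoidHom.comp_apply, sum_zeroSumKey, add_zero]
    rfl
  · have hview : (fun ω => (∑ k, W k ω, fun k : {k : Fin K // k ∈ T} => (W k.1 ω, Ntot k.1 ω)))
        = fun ω => schemeView _ K T (U ω) := by
      simp only [hNtot_eq]
      rfl
    simp only [hX_eq, hview]
    exact condMI_comp_addMonoidHom_eq_zero_of_isUnif hU (isUnif_pi_of_iIndepFun hindep hunif)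
      (schemeInputs _ K) (schemeMessages _ K) (schemeView _ K T) (ker_schemeView_le_sup T)

/-- the canonical zero-sum-key scheme `X_k = W_k + N_k` (with
`N_K = −(N_1+⋯+N_{K−1})`) is a correct and secure summation scheme: the messages sum to
the sum of the inputs, and security holds against every colluding set `T ⊆ [K]`; in
particular the rate tuple `(R, R_Z, R_{Z_Σ}) = (1, 1, K−1)` is achievable. -/
theorem stmt7
    (q K L : ℕ) [NeZero q] (hq : IsPrimePow q) (hK : 2 ≤ K) (hL : 1 ≤ L)
    {Ω : Type*} [MeasurableSpace Ω] (μ : Measure Ω) [IsProbabilityMeasure μ]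
    (W : Fin K → Ω → (Fin L → ZMod q))
    (N : Fin (K - 1) → Ω → (Fin L → ZMod q))
    (hWmeas : ∀ k, Measurable (W k)) (hNmeas : ∀ j, Measurable (N j))
    (hunif : ∀ i : Fin K ⊕ Fin (K - 1), IsUnif μ (Sum.elim W N i))
    (hindep : iIndepFun (Sum.elim W N) μ)
    (Ntot : Fin K → Ω → (Fin L → ZMod q))
    (hNtot : ∀ k : Fin K, Ntot k =
      if h : (k : ℕ) < K - 1 then N ⟨k, h⟩ else fun ω => -(∑ j, N j ω))
    (X : Fin K → Ω → (Fin L → ZMod q))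
    (hX : ∀ k, X k = fun ω => W k ω + Ntot k ω) :
    (∀ᵐ ω ∂μ, ∑ k, X k ω = ∑ k, W k ω) ∧
      ∀ T : Finset (Fin K),
        condMI μ (fun ω => fun k => W k ω) (fun ω => fun k => X k ω)
          (fun ω => (∑ k, W k ω,
            fun k : {k : Fin K // k ∈ T} => (W k.1 ω, Ntot k.1 ω))) = 0 :=
  stmt7_general q K L μ W N hWmeas hNmeas hunif hindep Ntot hNtot X hX
end

section
/- Consider K ≥ 2 users with general groupwise keys given by a family 𝒢̄ of subsets of {1,…,K}, each of size at least 2, where for each 𝒢 ∈ 𝒢̄ the key S_𝒢 is uniformly distributed on (ZMod q)^{|𝒢|−1}, the keys are mutually independent and independent of the inputs W_1,…,W_K, which are mutually independent and uniform on ZMod q. For each 𝒢 ∈ 𝒢̄ of size g with enumeration u_1,…,u_g, set h_𝒢^{u_i} = e_i (i ≤ g−1), h_𝒢^{u_g} = −(e_1+⋯+e_{g−1}), and h_𝒢^u = 0 for u ∉ 𝒢, and define the messages X_k = W_k + Σ_{𝒢∈𝒢̄, k∈𝒢} h_𝒢^k · S_𝒢 (a scalar in ZMod q). Then (i) X_1+⋯+X_K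 = W_1+⋯+W_K almost surely, and (ii) for every T ⊆ {1,…,K} such that the hypergraph on node set {1,…,K}\T with edge set {𝒢 ∈ 𝒢̄ : 𝒢 ∩ T = ∅} is connected, the security constraint I((W_k)_{k∈[K]}; (X_k)_{k∈[K]} | W_1+⋯+W_K, (W_k, Z_k)_{k∈T}) = 0 holds, where Z_k = (S_𝒢)_{𝒢∈𝒢̄, k∈𝒢}. -/
open MeasureTheory ProbabilityTheory

/-!
Put `U = (W, S)`; it is uniform on the finite group `V = (ZMod q)^K × ∏_𝒢 (ZMod q)^(|𝒢|-1)`, and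
the inputs, the messages and the colluders' view are additive homomorphisms `A`, `B`, `C` of `U`.
A homomorphic image of a uniform variable has entropy `log |V| - log |ker|`, so
`I(A; B | C) = log (|ker A ⊓ ker B ⊓ ker C| |ker C| / (|ker A ⊓ ker C| |ker B ⊓ ker C|))`,
which vanishes as soon as `B` maps `ker A ⊓ ker C` onto `B (ker C)`. This surjectivity is the
combinatorial core: a key of a group `𝒢` avoiding `T` shifts the messages by `e_u - e_v` for any
`u, v ∈ 𝒢`, so by connectivity the keys hidden from `T` realize every zero-sum shift supported
off `T`. Correctness holds because every column of the coefficients `h_𝒢` sums to zero.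
-/

open Finset Real

namespace AddMonoidHom

variable {V β : Type*} [AddCommGroup V] [AddCommGroup β]

lemma card_fiber_eq_card_ker [Fintype V] [DecidableEq β] (F : V →+ β) (v : V) :
    #{x | F x = F v} = Nat.card F.ker := by
  rw [← Fintype.card_subtype, ← Nat.card_eq_fintype_card]
  exact Nat.card_congr <| (Equiv.subRight v).subtypeEquiv fun x => by
    simp [mem_ker, sub_eq_zero]

lemma card_map_mul_card_inf_ker (F : V →+ β) (H : AddSubgroup V) :
    Nat.card (H.map F) * Nat.card ↥(H ⊓ F.ker) = Nat.card H := by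
  rw [← domRestrict_range, ← AddSubgroup.index_ker, mul_comm, ker_domRestrict,
    ← AddSubgroup.inf_addSubgroupOf_left,
    ← Nat.card_congr (AddSubgroup.addSubgroupOfEquivOfLe inf_le_left).toEquiv,
    AddSubgroup.card_mul_index]

lemma card_mul_card_inf_ker_comm (F : V →+ β) {H₁ H₂ : AddSubgroup V}
    (h : H₁.map F = H₂.map F) :
    Nat.card H₁ * Nat.card ↥(H₂ ⊓ F.ker) = Nat.card H₂ * Nat.card ↥(H₁ ⊓ F.ker) := by
  rw [← F.card_map_mul_card_inf_ker H₁, ← F.card_map_mul_card_inf_ker H₂, h]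
  ring

end AddMonoidHom

namespace IsUnif

variable {Ω : Type*} [MeasurableSpace Ω] {μ : Measure Ω}

section

variable {V β : Type*}
  [Fintype V] [MeasurableSpace V] [MeasurableSingletonClass V]
  [Fintype β] [MeasurableSpace β] [MeasurableSingletonClass β] {U : Ω → V}

lemma measure_preimage (hU : Measurable U) (hUnif : IsUnif μ U) (s : Finset V) :
    μ (U ⁻¹' s) = #s * (Fintype.card V : ENNReal)⁻¹ := by
  rw [← sum_measure_preimage_singleton s fun v _ => hU (measurableSet_singleton v)]
  rw [sum_congr rfl fun v _ => hUnif v, sum_const, nsmul_eq_mul]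

lemma entr_comp [DecidableEq β] (hU : Measurable U) (hUnif : IsUnif μ U) (F : V → β) :
    entr μ (fun ω => F (U ω)) = ∑ b, negMulLog (#{v | F v = b} / Fintype.card V) := by
  refine sum_congr rfl fun b _ => ?_
  have hF : Measurable (fun ω => F (U ω)) := (measurable_of_countable F).comp hU
  have hfiber : (fun ω => F (U ω)) ⁻¹' {b} = U ⁻¹' ↑({v | F v = b} : Finset V) := by
    ext; simp
  rw [Measure.map_apply hF (measurableSet_singleton b), hfiber, hUnif.measure_preimage hU]
  simp [div_eq_mul_inv]

lemma entr_comp_addMonoidHom [AddCommGroup V] [AddCommGroup β] (hU : Measurable U)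
    (hUnif : IsUnif μ U) (F : V →+ β) :
    entr μ (fun ω => F (U ω)) = log (Fintype.card V) - log (Nat.card F.ker) := by
  classical
  have hk : (0 : ℝ) < Nat.card F.ker := by exact_mod_cast Nat.card_pos
  have hn : (0 : ℝ) < Fintype.card V := by exact_mod_cast Fintype.card_pos
  have hfiber : ∀ b, negMulLog (#{v | F v = b} / Fintype.card V)
      = #{v | F v = b} / Fintype.card V * (log (Fintype.card V) - log (Nat.card F.ker)) := by
    intro b
    obtain ⟨v, rfl⟩ | hb := em (∃ v, F v = b)
    · rw [F.card_fiber_eq_card_ker, negMulLog, log_div hk.ne' hn.ne']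
      ring
    · have : #{v | F v = b} = 0 :=
        card_eq_zero.2 <| filter_eq_empty_iff.2 fun v _ hv => hb ⟨v, hv⟩
      simp [this]
  rw [hUnif.entr_comp hU, sum_congr rfl fun b _ => hfiber b, ← sum_mul, ← sum_div]
  rw [← Nat.cast_sum, ← card_eq_sum_card_fiberwise (fun v _ => mem_univ (F v)), card_univ,
    div_self hn.ne', one_mul]

end

lemma pi {ι : Type*} [Fintype ι] [DecidableEq ι] {β : ι → Type*} [∀ i, Fintype (β i)]
    [∀ i, MeasurableSpace (β i)] [∀ i, MeasurableSingletonClass (β i)] {X : ∀ i, Ω → β i}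
    (hind : iIndepFun X μ) (hX : ∀ i, IsUnif μ (X i)) :
    IsUnif μ (fun ω i => X i ω) := by
  intro b
  have hfiber : (fun ω i => X i ω) ⁻¹' {b} = ⋂ i, X i ⁻¹' {b i} := by
    ext; simp [funext_iff]
  rw [hfiber, hind.meas_iInter fun i => ⟨{b i}, measurableSet_singleton _, rfl⟩,
    Fintype.card_pi, Nat.cast_prod, ENNReal.prod_inv_distrib]
  · exact prod_congr rfl fun i _ => hX i (b i)
  · intro i _ j _ _
    simp

lemma prod {α β : Type*} [Fintype α] [MeasurableSpace α] [MeasurableSingletonClass α]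
    [Fintype β] [MeasurableSpace β] [MeasurableSingletonClass β] {X : Ω → α} {Y : Ω → β}
    (hind : IndepFun X Y μ) (hX : IsUnif μ X) (hY : IsUnif μ Y) :
    IsUnif μ (fun ω => (X ω, Y ω)) := by
  rintro ⟨a, b⟩
  have hfiber : (fun ω => (X ω, Y ω)) ⁻¹' {(a, b)} = X ⁻¹' {a} ∩ Y ⁻¹' {b} := by
    ext; simp
  rw [hfiber, hind.measure_inter_preimage_eq_mul _ _ (measurableSet_singleton a)
    (measurableSet_singleton b), hX a, hY b, Fintype.card_prod, Nat.cast_mul,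
    ENNReal.mul_inv (by simp) (by simp)]

end IsUnif

theorem condMI_comp_addMonoidHom_eq_zero {Ω V α β γ : Type*} [MeasurableSpace Ω]
    {μ : Measure Ω}
    [AddCommGroup V] [Fintype V] [MeasurableSpace V] [MeasurableSingletonClass V]
    [AddCommGroup α] [Fintype α] [MeasurableSpace α] [MeasurableSingletonClass α]
    [AddCommGroup β] [Fintype β] [MeasurableSpace β] [MeasurableSingletonClass β]
    [AddCommGroup γ] [Fintype γ] [MeasurableSpace γ] [MeasurableSingletonClass γ]
    {U : Ω → V} (hU : Measurable U) (hUnif : IsUnif μ U) (A : V →+ α) (B : V →+ β) (C : V →+ γ)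
    (hmap : C.ker.map B ≤ (A.ker ⊓ C.ker).map B) :
    condMI μ (fun ω => A (U ω)) (fun ω => B (U ω)) (fun ω => C (U ω)) = 0 := by
  have hAC := hUnif.entr_comp_addMonoidHom hU (A.prod C)
  have hBC := hUnif.entr_comp_addMonoidHom hU (B.prod C)
  have hABC := hUnif.entr_comp_addMonoidHom hU ((A.prod B).prod C)
  have hC := hUnif.entr_comp_addMonoidHom hU C
  simp only [AddMonoidHom.prod_apply, AddMonoidHom.ker_prod] at hAC hBC hABC
  have hcard :=
    B.card_mul_card_inf_ker_comm (le_antisymm (AddSubgroup.map_mono inf_le_right) hmap)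
  rw [inf_comm C.ker, inf_right_comm] at hcard
  have hcard' : (Nat.card ↥(A.ker ⊓ C.ker) : ℝ) * Nat.card ↥(B.ker ⊓ C.ker)
      = Nat.card C.ker * Nat.card ↥(A.ker ⊓ B.ker ⊓ C.ker) := by
    exact_mod_cast hcard
  have hlog := congrArg log hcard'
  rw [log_mul, log_mul] at hlog
  · unfold condMI condEntr
    rw [hAC, hBC, hABC, hC]
    linarith
  all_goals exact_mod_cast Nat.card_pos.ne'

lemma Fin.sum_mul_ite_val_eq {R : Type*} [Semiring R] {m : ℕ} (f : Fin m → R) (n : ℕ) :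
    ∑ j : Fin m, f j * (if (j : ℕ) = n then 1 else 0) = if h : n < m then f ⟨n, h⟩ else 0 := by
  split_ifs with h
  · rw [Fintype.sum_eq_single ⟨n, h⟩] <;> simp +contextual [Fin.ext_iff]
  · exact sum_eq_zero fun j _ => by simp [show (j : ℕ) ≠ n by omega]

def IsConnectedHypergraph {α : Type*} [DecidableEq α] (s : Finset α) (E : Finset α → Prop) :
    Prop :=
  ∀ V₁ ⊆ s, V₁.Nonempty → (s \ V₁).Nonempty →
    ∃ e, E e ∧ (e ∩ V₁).Nonempty ∧ (e ∩ (s \ V₁)).Nonempty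

theorem IsConnectedHypergraph.forall_mem {α : Type*} [DecidableEq α] {s : Finset α}
    {E : Finset α → Prop} (hconn : IsConnectedHypergraph s E)
    {p : α → Prop} {u : α} (hu : u ∈ s) (hpu : p u)
    (hp : ∀ e, E e → ∀ x ∈ e, ∀ y ∈ e, p x → p y) :
    ∀ v ∈ s, p v := by
  classical
  by_contra! ⟨v, hv, hpv⟩
  obtain ⟨e, he, ⟨x, hx⟩, ⟨y, hy⟩⟩ := hconn (s.filter p) (filter_subset p s)
    ⟨u, mem_filter.2 ⟨hu, hpu⟩⟩ ⟨v, by simp [hv, hpv]⟩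
  simp only [mem_inter, mem_filter, mem_sdiff] at hx hy
  exact hy.2.2 ⟨hy.2.1, hp e he x hx.1 y hy.1 hx.2.2⟩

section GroupKeys

variable {R α : Type*} [CommRing R] {Gbar : Finset (Finset α)}

abbrev GroupKeys (R : Type*) (Gbar : Finset (Finset α)) :=
  ∀ g : {g : Finset α // g ∈ Gbar}, Fin (g.1.card - 1) → R

def keyMap (h : ∀ g : {g : Finset α // g ∈ Gbar}, α → (Fin (g.1.card - 1) → R)) :
    GroupKeys R Gbar →ₗ[R] (α → R) where
  toFun s k := ∑ g, ∑ j, h g k j * s g j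
  map_add' s t := by ext k; simp [mul_add, sum_add_distrib]
  map_smul' c s := by ext k; simp [mul_sum, mul_left_comm]

lemma keyMap_single_apply [DecidableEq α]
    (h : ∀ g : {g : Finset α // g ∈ Gbar}, α → (Fin (g.1.card - 1) → R)) (g) (x) (k : α) :
    keyMap h (Pi.single g x) k = ∑ j, h g k j * x j := by
  simp only [keyMap, LinearMap.coe_mk, AddHom.coe_mk]
  rw [Fintype.sum_eq_single g fun g' hg' => by simp [hg'], Pi.single_eq_same]

def keysHiddenFrom [DecidableEq α] (T : Finset α) : Submodule R (GroupKeys R Gbar) :=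
  Submodule.pi {g | (g.1 ∩ T).Nonempty} fun _ => ⊥

def messageMap (h : ∀ g : {g : Finset α // g ∈ Gbar}, α → (Fin (g.1.card - 1) → R)) :
    (α → R) × GroupKeys R Gbar →+ (α → R) :=
  AddMonoidHom.fst _ _ + (keyMap h).toAddMonoidHom.comp (AddMonoidHom.snd _ _)

lemma messageMap_apply (h : ∀ g : {g : Finset α // g ∈ Gbar}, α → (Fin (g.1.card - 1) → R))
    (v : (α → R) × GroupKeys R Gbar) : messageMap h v = v.1 + keyMap h v.2 :=
  rfl

def colluderView [Fintype α] (T : Finset α) :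
    (α → R) × GroupKeys R Gbar →+
      R × ∀ k : {k : α // k ∈ T}, R × ∀ g : {g : Finset α // g ∈ Gbar ∧ k.1 ∈ g},
        Fin (g.1.card - 1) → R :=
  AddMonoidHom.mk' (fun v => (∑ k, v.1 k, fun k => (v.1 k, fun g => v.2 ⟨g.1, g.2.1⟩)))
    fun v w => by ext <;> simp [sum_add_distrib]

lemma mem_ker_colluderView [Fintype α] [DecidableEq α] {T : Finset α}
    {v : (α → R) × GroupKeys R Gbar} :
    v ∈ (colluderView T).ker
      ↔ ∑ k, v.1 k = 0 ∧ (∀ k ∈ T, v.1 k = 0) ∧ ∀ g, (g.1 ∩ T).Nonempty → v.2 g = 0 := by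
  simp only [AddMonoidHom.mem_ker, colluderView, AddMonoidHom.mk'_apply, Prod.ext_iff,
    funext_iff]
  simp only [Prod.fst_zero, Prod.snd_zero, Pi.zero_apply, Subtype.forall]
  refine and_congr_right fun _ => ⟨fun H => ⟨fun k hk => (H k hk).1, fun g hg ⟨k, hk⟩ x => ?_⟩,
    fun H k hk => ⟨H.1 k hk, fun g hg => H.2 g hg.1 ⟨k, mem_inter.2 ⟨hg.2, hk⟩⟩⟩⟩
  rw [mem_inter] at hk
  exact (H k hk.2).2 g ⟨hg, hk.1⟩ x

structure IsGroupKeyCoeffs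
    (enum : ∀ g : {g : Finset α // g ∈ Gbar}, Fin g.1.card ≃ {k : α // k ∈ g.1})
    (h : ∀ g : {g : Finset α // g ∈ Gbar}, α → (Fin (g.1.card - 1) → R)) : Prop where
  eq_zero : ∀ (g) (k), k ∉ g.1 → h g k = 0
  basis : ∀ (g) (i : Fin g.1.card), (i : ℕ) < g.1.card - 1 →
    h g (enum g i).1 = fun (j : Fin (g.1.card - 1)) => if (j : ℕ) = (i : ℕ) then (1 : R) else 0
  last : ∀ (g) (i : Fin g.1.card), (i : ℕ) = g.1.card - 1 → h g (enum g i).1 = fun _ => -1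

namespace IsGroupKeyCoeffs

variable {enum : ∀ g : {g : Finset α // g ∈ Gbar}, Fin g.1.card ≃ {k : α // k ∈ g.1}}
  {h : ∀ g : {g : Finset α // g ∈ Gbar}, α → (Fin (g.1.card - 1) → R)}

lemma coeff_enum (hh : IsGroupKeyCoeffs enum h) (g) (i : Fin g.1.card)
    (j : Fin (g.1.card - 1)) :
    h g (enum g i) j
      = (if (j : ℕ) = i then 1 else 0) - if (i : ℕ) = g.1.card - 1 then 1 else 0 := by
  rcases (Nat.le_sub_one_of_lt i.2).lt_or_eq with hi | hi
  · simp [hh.basis g i hi, hi.ne]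
  · simp [hh.last g i hi, hi, j.2.ne]

lemma coeff_enum_mul_basis (hh : IsGroupKeyCoeffs enum h) (g) (i a : Fin g.1.card) :
    ∑ j : Fin (g.1.card - 1), h g (enum g i) j * (if (j : ℕ) = a then 1 else 0)
      = (if i = a then 1 else 0) - if (i : ℕ) = g.1.card - 1 then 1 else 0 := by
  rw [Fin.sum_mul_ite_val_eq]
  simp only [hh.coeff_enum, Fin.ext_iff]
  split_ifs <;> first | omega | simp

lemma keyMap_single_basis_sub [DecidableEq α] (hh : IsGroupKeyCoeffs enum h) (g)
    (a b : Fin g.1.card) :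
    keyMap h (Pi.single g fun j => (if (j : ℕ) = a then 1 else 0) - if (j : ℕ) = b then 1 else 0)
      = Pi.single (enum g a : α) 1 - Pi.single (enum g b : α) 1 := by
  ext k
  rw [keyMap_single_apply]
  by_cases hk : k ∈ g.1
  · obtain ⟨i, rfl⟩ : ∃ i, (enum g i : α) = k := ⟨(enum g).symm ⟨k, hk⟩, by simp⟩
    simp only [mul_sub, sum_sub_distrib, hh.coeff_enum_mul_basis]
    simp [Pi.single_apply, (enum g).injective.eq_iff]
  · have hne : ∀ c, (enum g c : α) ≠ k := fun c hc => hk (hc ▸ (enum g c).2)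
    simp [hh.eq_zero g k hk, (hne _).symm]

lemma single_sub_single_mem [DecidableEq α] (hh : IsGroupKeyCoeffs enum h) {T : Finset α}
    {g : {g : Finset α // g ∈ Gbar}} (hgT : g.1 ∩ T = ∅)
    {u v : α} (hu : u ∈ g.1) (hv : v ∈ g.1) :
    Pi.single u 1 - Pi.single v 1 ∈ (keysHiddenFrom (R := R) T).map (keyMap h) := by
  refine ⟨Pi.single g fun j => (if (j : ℕ) = (enum g).symm ⟨u, hu⟩ then 1 else 0)
    - if (j : ℕ) = (enum g).symm ⟨v, hv⟩ then 1 else 0, fun g' hg' => ?_, ?_⟩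
  · have : g' ≠ g := by rintro rfl; simp [hgT] at hg'
    simp [this]
  · simp [hh.keyMap_single_basis_sub]

variable [Fintype α]

lemma sum_coeff_eq_zero (hh : IsGroupKeyCoeffs enum h) (g) (j : Fin (g.1.card - 1)) :
    ∑ k, h g k j = 0 := by
  rw [← sum_subset (subset_univ g.1) fun k _ hk => by rw [hh.eq_zero g k hk]; rfl,
    ← sum_coe_sort, ← (enum g).sum_comp]
  have hj := j.2
  have hone : ∀ n < g.1.card, ∑ i : Fin g.1.card, (if (i : ℕ) = n then (1 : R) else 0) = 1 :=
    fun n hn => by simpa [hn] using Fin.sum_mul_ite_val_eq (m := g.1.card) (fun _ => (1 : R)) n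
  simp only [hh.coeff_enum, sum_sub_distrib, eq_comm (a := (j : ℕ))]
  rw [hone j (by omega), hone _ (by omega), sub_self]

lemma sum_keyMap_apply (hh : IsGroupKeyCoeffs enum h) (s : GroupKeys R Gbar) :
    ∑ k, keyMap h s k = 0 := by
  simp only [keyMap, LinearMap.coe_mk, AddHom.coe_mk]
  rw [sum_comm]
  refine sum_eq_zero fun g _ => ?_
  rw [sum_comm]
  exact sum_eq_zero fun j _ => by rw [← sum_mul, hh.sum_coeff_eq_zero, zero_mul]

variable [DecidableEq α]

lemma mem_map_keyMap_keysHiddenFrom (hh : IsGroupKeyCoeffs enum h) {T : Finset α}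
    (hconn : IsConnectedHypergraph Tᶜ fun g => g ∈ Gbar ∧ g ∩ T = ∅)
    {d : α → R} (hdT : ∀ k ∈ T, d k = 0) (hd : ∑ k, d k = 0) :
    d ∈ (keysHiddenFrom T).map (keyMap h) := by
  by_cases hd0 : d = 0
  · exact hd0 ▸ zero_mem _
  obtain ⟨u, hu⟩ := Function.ne_iff.1 hd0
  have huT : u ∈ Tᶜ := mem_compl.2 fun huT => hu (hdT u huT)
  have hreach : ∀ v ∈ Tᶜ, Pi.single v 1 - Pi.single u 1 ∈ (keysHiddenFrom T).map (keyMap h) := by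
    refine hconn.forall_mem huT (by simp) fun e ⟨he, heT⟩ x hx y hy hxu => ?_
    rw [← sub_add_sub_cancel _ (Pi.single x 1)]
    exact add_mem (hh.single_sub_single_mem (g := ⟨e, he⟩) heT hy hx) hxu
  have hsum : d = ∑ v, d v • (Pi.single v 1 - Pi.single u 1) := by
    ext k
    simp [Pi.single_apply, smul_sub, sum_sub_distrib, hd]
  rw [hsum]
  refine sum_mem fun v _ => ?_
  by_cases hvT : v ∈ T
  · simp [hdT v hvT]
  · exact Submodule.smul_mem _ _ (hreach v (mem_compl.2 hvT))

lemma map_ker_colluderView_le (hh : IsGroupKeyCoeffs enum h) {T : Finset α}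
    (hconn : IsConnectedHypergraph Tᶜ fun g => g ∈ Gbar ∧ g ∩ T = ∅) :
    (colluderView T).ker.map (messageMap h)
      ≤ ((AddMonoidHom.fst _ _).ker ⊓ (colluderView (R := R) (Gbar := Gbar) T).ker).map
        (messageMap h) := by
  rintro _ ⟨⟨w, s⟩, hws, rfl⟩
  rw [SetLike.mem_coe, mem_ker_colluderView] at hws
  obtain ⟨hw, hwT, hsT⟩ := hws
  obtain ⟨t, ht, rfl⟩ := hh.mem_map_keyMap_keysHiddenFrom hconn hwT hw
  refine ⟨(0, s + t), AddSubgroup.mem_inf.2 ⟨AddMonoidHom.mem_ker.2 rfl,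
    mem_ker_colluderView.2 ⟨by simp, by simp, fun g hg => ?_⟩⟩, ?_⟩
  · simpa [show t g = 0 from ht g hg] using hsT g hg
  · simp [messageMap_apply, add_comm]

end IsGroupKeyCoeffs

end GroupKeys

theorem stmt15_general
    (q K : ℕ) [NeZero q]
    {Ω : Type*} [MeasurableSpace Ω] (μ : Measure Ω)
    (Gbar : Finset (Finset (Fin K)))
    (W : Fin K → Ω → ZMod q)
    (S : ∀ g : {g : Finset (Fin K) // g ∈ Gbar}, Ω → (Fin (g.1.card - 1) → ZMod q))
    (hWmeas : ∀ k, Measurable (W k)) (hSmeas : ∀ g, Measurable (S g))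
    (hWunif : ∀ k, IsUnif μ (W k)) (hSunif : ∀ g, IsUnif μ (S g))
    (hWindep : iIndepFun W μ)
    (hSindep : iIndepFun S μ)
    (hWSindep : IndepFun (fun ω => fun k => W k ω) (fun ω => fun g => S g ω) μ)
    (enum : ∀ g : {g : Finset (Fin K) // g ∈ Gbar}, Fin g.1.card ≃ {k : Fin K // k ∈ g.1})
    (h : ∀ g : {g : Finset (Fin K) // g ∈ Gbar}, Fin K → (Fin (g.1.card - 1) → ZMod q))
    (hzero : ∀ (g) (k), k ∉ g.1 → h g k = 0)
    (hbasis : ∀ (g) (i : Fin g.1.card), (i : ℕ) < g.1.card - 1 →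
      h g (enum g i).1 = fun (j : Fin (g.1.card - 1)) =>
        if (j : ℕ) = (i : ℕ) then (1 : ZMod q) else 0)
    (hlast : ∀ (g) (i : Fin g.1.card), (i : ℕ) = g.1.card - 1 →
      h g (enum g i).1 = fun _ => -1)
    (X : Fin K → Ω → ZMod q)
    (hX : ∀ k, X k = fun ω =>
      W k ω + ∑ g : {g : Finset (Fin K) // g ∈ Gbar}, ∑ j, h g k j * S g ω j) :
    (∀ᵐ ω ∂μ, ∑ k, X k ω = ∑ k, W k ω) ∧
      ∀ T : Finset (Fin K),
        (∀ V1 : Finset (Fin K), V1 ⊆ Tᶜ → V1.Nonempty → (Tᶜ \ V1).Nonempty →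
          ∃ g ∈ Gbar, g ∩ T = ∅ ∧ (g ∩ V1).Nonempty ∧ (g ∩ (Tᶜ \ V1)).Nonempty) →
        condMI μ (fun ω => fun k => W k ω) (fun ω => fun k => X k ω)
          (fun ω => (∑ k, W k ω,
            fun k : {k : Fin K // k ∈ T} => (W k.1 ω,
              fun g : {g : Finset (Fin K) // g ∈ Gbar ∧ k.1 ∈ g} =>
                S ⟨g.1, g.2.1⟩ ω))) = 0 := by
  have hh : IsGroupKeyCoeffs enum h := ⟨hzero, hbasis, hlast⟩
  refine ⟨Filter.Eventually.of_forall fun ω => ?_, fun T hconn => ?_⟩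
  · simp only [hX, sum_add_distrib]
    rw [add_eq_left]
    exact hh.sum_keyMap_apply fun g => S g ω
  · set U : Ω → (Fin K → ZMod q) × GroupKeys (ZMod q) Gbar :=
      fun ω => (fun k => W k ω, fun g => S g ω)
    have hU : Measurable U :=
      (measurable_pi_lambda _ hWmeas).prodMk (measurable_pi_lambda _ hSmeas)
    have hUnif : IsUnif μ U :=
      (IsUnif.pi hWindep hWunif).prod hWSindep (IsUnif.pi hSindep hSunif)
    have hXU : (fun ω k => X k ω) = fun ω => messageMap h (U ω) := by
      funext ω k
      rw [hX k]
      rfl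
    rw [hXU]
    exact condMI_comp_addMonoidHom_eq_zero hU hUnif (AddMonoidHom.fst _ _) (messageMap h)
      (colluderView T) <| hh.map_ker_colluderView_le fun V₁ h₁ h₂ h₃ => by
        simpa only [and_assoc] using hconn V₁ h₁ h₂ h₃

/-- the scalar zero-sum groupwise-key scheme
`X_k = W_k + Σ_{𝒢 ∋ k} h_𝒢^k · S_𝒢` is correct, and it is secure against every colluding
set `T` for which the key hypergraph restricted to `[K]∖T` (with edges the key groups
avoiding `T`) is connected. -/
theorem stmt15
    (q K : ℕ) [NeZero q] (hq : IsPrimePow q) (hK : 2 ≤ K)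
    {Ω : Type*} [MeasurableSpace Ω] (μ : Measure Ω) [IsProbabilityMeasure μ]
    (Gbar : Finset (Finset (Fin K))) (hG2 : ∀ g ∈ Gbar, 2 ≤ g.card)
    (W : Fin K → Ω → ZMod q)
    (S : ∀ g : {g : Finset (Fin K) // g ∈ Gbar}, Ω → (Fin (g.1.card - 1) → ZMod q))
    (hWmeas : ∀ k, Measurable (W k)) (hSmeas : ∀ g, Measurable (S g))
    (hWunif : ∀ k, IsUnif μ (W k)) (hSunif : ∀ g, IsUnif μ (S g))
    (hWindep : iIndepFun W μ)
    (hSindep : iIndepFun S μ)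
    (hWSindep : IndepFun (fun ω => fun k => W k ω) (fun ω => fun g => S g ω) μ)
    (enum : ∀ g : {g : Finset (Fin K) // g ∈ Gbar}, Fin g.1.card ≃ {k : Fin K // k ∈ g.1})
    (h : ∀ g : {g : Finset (Fin K) // g ∈ Gbar}, Fin K → (Fin (g.1.card - 1) → ZMod q))
    (hzero : ∀ (g) (k), k ∉ g.1 → h g k = 0)
    (hbasis : ∀ (g) (i : Fin g.1.card), (i : ℕ) < g.1.card - 1 →
      h g (enum g i).1 = fun (j : Fin (g.1.card - 1)) =>
        if (j : ℕ) = (i : ℕ) then (1 : ZMod q) else 0)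
    (hlast : ∀ (g) (i : Fin g.1.card), (i : ℕ) = g.1.card - 1 →
      h g (enum g i).1 = fun _ => -1)
    (X : Fin K → Ω → ZMod q)
    (hX : ∀ k, X k = fun ω =>
      W k ω + ∑ g : {g : Finset (Fin K) // g ∈ Gbar}, ∑ j, h g k j * S g ω j) :
    (∀ᵐ ω ∂μ, ∑ k, X k ω = ∑ k, W k ω) ∧
      ∀ T : Finset (Fin K),
        (∀ V1 : Finset (Fin K), V1 ⊆ Tᶜ → V1.Nonempty → (Tᶜ \ V1).Nonempty →
          ∃ g ∈ Gbar, g ∩ T = ∅ ∧ (g ∩ V1).Nonempty ∧ (g ∩ (Tᶜ \ V1)).Nonempty) →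
        condMI μ (fun ω => fun k => W k ω) (fun ω => fun k => X k ω)
          (fun ω => (∑ k, W k ω,
            fun k : {k : Fin K // k ∈ T} => (W k.1 ω,
              fun g : {g : Finset (Fin K) // g ∈ Gbar ∧ k.1 ∈ g} =>
                S ⟨g.1, g.2.1⟩ ω))) = 0 :=
  stmt15_general q K μ Gbar W S hWmeas hSmeas hWunif hSunif hWindep hSindep hWSindep enum h hzero
    hbasis hlast X hX
end
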